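/- arXiv:2303.06392 — 5 statements merged into one kernel-verified Lean document; each statement's English description precedes it below -/
import Mathlib

section
/- Let E be a real normed space and let K ⊆ E be a nontrivial cone with norm-base B_K. Then: (i) every continuous linear functional x* ∈ E* with sInf {x*(x) | x ∈ B_K} > 0 belongs to the algebraic interior cor K⁺ of the dual cone K⁺; (ii) cor K⁺ ⊆ K^#; (iii) K^# ⊆ K⁺; and (iv) K⁺ = {x* ∈ E* | sInf {x*(x) | x ∈ B_K} ≥ 0}. -/
open Set

variable {E : Type*} [NormedAddCommGroup E] [NormedSpace ℝ E]

/-- `K` is a cone: contains `0` and is closed under nonnegative scalar multiplication. -/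
def IsCone (K : Set E) : Prop :=
  (0 : E) ∈ K ∧ ∀ t : ℝ, 0 ≤ t → ∀ x ∈ K, t • x ∈ K

/-- A cone is nontrivial if it is neither `{0}` nor the whole space. -/
def IsNontrivialCone (K : Set E) : Prop :=
  IsCone K ∧ K ≠ {0} ∧ K ≠ Set.univ

/-- The norm-base of a cone: its intersection with the unit sphere. -/
def normBase (K : Set E) : Set E := {x ∈ K | ‖x‖ = 1}

/-- Closure of a set with respect to the weak topology `σ(E, E*)`. -/
noncomputable def wClosure (S : Set E) : Set E :=
  (toWeakSpace ℝ E).symm '' closure ((toWeakSpace ℝ E) '' S)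

/-- A set is weakly compact if it is compact in the weak topology `σ(E, E*)`. -/
def WeaklyCompact (S : Set E) : Prop :=
  IsCompact ((toWeakSpace ℝ E) '' S)

/-- A set is weakly closed if it equals its weak closure. -/
noncomputable def WeaklyClosed (S : Set E) : Prop :=
  wClosure S = S

/-- The (topological) dual cone `K⁺`. -/
def dualCone (K : Set E) : Set (E →L[ℝ] ℝ) :=
  {f | ∀ k ∈ K, 0 ≤ f k}

/-- The set `K^#` of functionals strictly positive on `K \ {0}`. -/
def sharpCone (K : Set E) : Set (E →L[ℝ] ℝ) :=
  {f | ∀ k ∈ K, k ≠ 0 → 0 < f k}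

/-- The set `K^{w#}` of functionals strictly positive on the weak closure of the norm-base. -/
noncomputable def wSharpCone (K : Set E) : Set (E →L[ℝ] ℝ) :=
  {f | ∀ x ∈ wClosure (normBase K), 0 < f x}

/-- The algebraic interior (core) of a set in a real vector space. -/
def core {X : Type*} [AddCommGroup X] [Module ℝ X] (Ω : Set X) : Set X :=
  {x ∈ Ω | ∀ v : X, ∃ ε > 0, ∀ t ∈ Set.Icc (0 : ℝ) ε, x + t • v ∈ Ω}

/-- The augmented dual cone `K^{a+}`. -/
def augDualCone (K : Set E) : Set ((E →L[ℝ] ℝ) × ℝ) :=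
  {p | 0 ≤ p.2 ∧ ∀ y ∈ K, 0 ≤ p.1 y - p.2 * ‖y‖}

/-- The set `K^{a#}`. -/
def augSharpCone (K : Set E) : Set ((E →L[ℝ] ℝ) × ℝ) :=
  {p | 0 ≤ p.2 ∧ p.1 ∈ sharpCone K ∧ ∀ y ∈ K, y ≠ 0 → 0 < p.1 y - p.2 * ‖y‖}

/-- The set `K^{aw#}`. -/
noncomputable def augWSharpCone (K : Set E) : Set ((E →L[ℝ] ℝ) × ℝ) :=
  {p | 0 ≤ p.2 ∧ p.1 ∈ sharpCone K ∧ ∀ y ∈ wClosure (normBase K), p.2 < p.1 y}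

/-- `S_C = conv(B_C)`. -/
noncomputable def convBase (C : Set E) : Set E := convexHull ℝ (normBase C)

/-- `S_C^0 = conv({0} ∪ B_C)`. -/
noncomputable def convBase0 (C : Set E) : Set E := convexHull ℝ ({0} ∪ normBase C)

/-!
A functional is nonnegative on the cone `K` iff it is nonnegative on its norm-base, since every
nonzero `k ∈ K` is `‖k‖ • x` with `x ∈ B_K`. If `f ≥ m > 0` on `B_K`, then `f + t • v ≥ m - t‖v‖`
on `B_K`, so small perturbations of `f` stay in `K⁺`. Conversely, if `f ∈ cor K⁺`, moving from `f`
in the direction `-g`, where `g` is a Hahn–Banach functional with `g k = ‖k‖`, stays in `K⁺` for a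
while, which forces `f k ≥ ε ‖k‖ > 0`.
-/

section NormBase

variable {K : Set E}

theorem neg_opNorm_le_apply_of_mem_normBase (f : E →L[ℝ] ℝ) {x : E} (hx : x ∈ normBase K) :
    -‖f‖ ≤ f x := by
  have h := f.le_opNorm x
  rw [hx.2, mul_one, Real.norm_eq_abs] at h
  exact neg_le_of_abs_le h

theorem bddBelow_image_normBase (f : E →L[ℝ] ℝ) : BddBelow ((fun x => f x) '' normBase K) :=
  ⟨-‖f‖, by
    rintro _ ⟨x, hx, rfl⟩
    exact neg_opNorm_le_apply_of_mem_normBase f hx⟩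

theorem sInf_image_normBase_le (f : E →L[ℝ] ℝ) {x : E} (hx : x ∈ normBase K) :
    sInf ((fun x => f x) '' normBase K) ≤ f x :=
  csInf_le (bddBelow_image_normBase f) ⟨x, hx, rfl⟩

theorem IsCone.inv_norm_smul_mem_normBase (hK : IsCone K) {k : E} (hk : k ∈ K) (hk0 : k ≠ 0) :
    ‖k‖⁻¹ • k ∈ normBase K :=
  ⟨hK.2 _ (inv_nonneg.mpr (norm_nonneg k)) k hk, norm_smul_inv_norm hk0⟩

theorem IsCone.mul_norm_le_apply (hK : IsCone K) {f : E →L[ℝ] ℝ} {m : ℝ}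
    (hm : ∀ x ∈ normBase K, m ≤ f x) {k : E} (hk : k ∈ K) : m * ‖k‖ ≤ f k := by
  rcases eq_or_ne k 0 with rfl | hk0
  · simp
  have hbase := hm _ (hK.inv_norm_smul_mem_normBase hk hk0)
  rwa [map_smul, smul_eq_mul, le_inv_mul_iff₀' (norm_pos_iff.mpr hk0)] at hbase

theorem IsCone.mem_dualCone_of_forall_normBase (hK : IsCone K) {f : E →L[ℝ] ℝ}
    (hf : ∀ x ∈ normBase K, 0 ≤ f x) : f ∈ dualCone K := fun k hk => by
  simpa using hK.mul_norm_le_apply hf hk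

theorem IsCone.dualCone_eq_setOf_sInf_nonneg (hK : IsCone K) :
    dualCone K = {f : E →L[ℝ] ℝ | 0 ≤ sInf ((fun x => f x) '' normBase K)} := by
  ext f
  constructor
  · intro hf
    exact Real.sInf_nonneg <| by
      rintro _ ⟨x, hx, rfl⟩
      exact hf x hx.1
  · intro hf
    exact hK.mem_dualCone_of_forall_normBase fun x hx =>
      hf.trans (sInf_image_normBase_le f hx)

theorem IsCone.mem_core_dualCone_of_sInf_pos (hK : IsCone K) {f : E →L[ℝ] ℝ}
    (hf : 0 < sInf ((fun x => f x) '' normBase K)) : f ∈ core (dualCone K) := by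
  set m := sInf ((fun x => f x) '' normBase K)
  refine ⟨hK.mem_dualCone_of_forall_normBase fun x hx =>
    hf.le.trans (sInf_image_normBase_le f hx), fun v => ?_⟩
  refine ⟨m / (‖v‖ + 1), by positivity, fun t ht => ?_⟩
  refine hK.mem_dualCone_of_forall_normBase fun x hx => ?_
  have hfx : m ≤ f x := sInf_image_normBase_le f hx
  have hvx : -‖v‖ ≤ v x := neg_opNorm_le_apply_of_mem_normBase v hx
  have htv : t * ‖v‖ ≤ m := calc
    t * ‖v‖ ≤ m / (‖v‖ + 1) * (‖v‖ + 1) := by nlinarith [ht.1, ht.2, norm_nonneg v]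
    _ = m := div_mul_cancel₀ m (by positivity)
  have : 0 ≤ f x + t * v x := by nlinarith [ht.1]
  simpa using this

end NormBase

theorem core_dualCone_subset_sharpCone (K : Set E) : core (dualCone K) ⊆ sharpCone K := by
  rintro f ⟨-, hcore⟩ k hk hk0
  obtain ⟨g, -, hgk⟩ := exists_dual_vector'' ℝ k
  obtain ⟨ε, hε, hεf⟩ := hcore (-g)
  have hpert := hεf ε ⟨hε.le, le_rfl⟩ k hk
  simp only [add_apply, smul_apply, neg_apply, smul_eq_mul, hgk,
    RCLike.ofReal_real_eq_id, id_eq] at hpert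
  have : 0 < ε * ‖k‖ := mul_pos hε (norm_pos_iff.mpr hk0)
  linarith

theorem sharpCone_subset_dualCone (K : Set E) : sharpCone K ⊆ dualCone K := by
  intro f hf k hk
  rcases eq_or_ne k 0 with rfl | hk0
  · simp
  · exact (hf k hk hk0).le

theorem stmt0 (K : Set E) (hK : IsNontrivialCone K) :
    (∀ f : E →L[ℝ] ℝ, 0 < sInf ((fun x => f x) '' normBase K) → f ∈ core (dualCone K)) ∧
    core (dualCone K) ⊆ sharpCone K ∧
    sharpCone K ⊆ dualCone K ∧
    dualCone K = {f : E →L[ℝ] ℝ | 0 ≤ sInf ((fun x => f x) '' normBase K)} :=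
  ⟨fun _ => hK.1.mem_core_dualCone_of_sInf_pos, core_dualCone_subset_sharpCone K,
    sharpCone_subset_dualCone K, hK.1.dualCone_eq_setOf_sInf_nonneg⟩
end

section
/- Let E be a real normed space and let K ⊆ E be a nontrivial cone with norm-base B_K. If 0 does not belong to the weak closure cl_w B_K of B_K, then cor K⁺ ⊆ K^{w#}, i.e., every element of the algebraic interior of the dual cone K⁺ satisfies x*(x) > 0 for all x ∈ cl_w B_K. -/
open Set

variable {E : Type*} [NormedAddCommGroup E] [NormedSpace ℝ E]

/-!
An element `f` of the core of `K⁺` can be perturbed in every direction `-g` without leaving `K⁺`.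
If `x ≠ 0` is nonnegative on all of `K⁺`, choosing `g x = 1` gives `f x - ε ≥ 0`, so `f x > 0`.
Points of `cl_w B_K` are such `x`: they are nonzero by hypothesis, and every `g ∈ K⁺` stays
nonnegative on `cl_w B_K` because `{g ≥ 0}` is weakly closed.
-/

lemma ContinuousLinearMap.continuous_comp_toWeakSpace_symm {𝕜 F : Type*} [NormedField 𝕜]
    [AddCommGroup F] [TopologicalSpace F] [Module 𝕜 F] (f : F →L[𝕜] 𝕜) :
    Continuous fun x : WeakSpace 𝕜 F => f ((toWeakSpace 𝕜 F).symm x) :=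
  WeakBilin.eval_continuous (topDualPairing 𝕜 F).flip f

lemma nonneg_on_wClosure {S : Set E} {f : E →L[ℝ] ℝ} (hf : ∀ s ∈ S, 0 ≤ f s) {x : E}
    (hx : x ∈ wClosure S) : 0 ≤ f x := by
  obtain ⟨y, hy, rfl⟩ := hx
  have hclosed : IsClosed {z : WeakSpace ℝ E | 0 ≤ f ((toWeakSpace ℝ E).symm z)} :=
    isClosed_le continuous_const f.continuous_comp_toWeakSpace_symm
  refine closure_minimal ?_ hclosed hy
  rintro _ ⟨s, hs, rfl⟩
  simpa using hf s hs

lemma apply_pos_of_mem_core_dualCone {K : Set E} {f : E →L[ℝ] ℝ} (hf : f ∈ core (dualCone K))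
    {x : E} (hx : x ≠ 0) (hKx : ∀ g ∈ dualCone K, 0 ≤ g x) : 0 < f x := by
  obtain ⟨g, hgx⟩ := SeparatingDual.exists_eq_one (R := ℝ) hx
  obtain ⟨ε, hε, hperturb⟩ := hf.2 (-g)
  have hfε : 0 ≤ f x - ε := by
    simpa [hgx, sub_eq_add_neg] using hKx _ (hperturb ε ⟨hε.le, le_rfl⟩)
  linarith

theorem stmt2_general (K : Set E)
    (h0 : (0 : E) ∉ wClosure (normBase K)) :
    core (dualCone K) ⊆ wSharpCone K := by
  intro f hf x hx
  have hx0 : x ≠ 0 := ne_of_mem_of_not_mem hx h0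
  exact apply_pos_of_mem_core_dualCone hf hx0 fun g hg =>
    nonneg_on_wClosure (fun s hs => hg s hs.1) hx

theorem stmt2 (K : Set E) (hK : IsNontrivialCone K)
    (h0 : (0 : E) ∉ wClosure (normBase K)) :
    core (dualCone K) ⊆ wSharpCone K :=
  stmt2_general K h0
end

section
/- Let E be a real normed space and K ⊆ E a nontrivial cone with norm-base B_K. If (x*, α) ∈ K^{a+} with α > 0, then for every ε with 0 < ε ≤ α the pair (x*, α − ε) belongs to K^{aw#}. -/
open Set

variable {E : Type*} [NormedAddCommGroup E] [NormedSpace ℝ E]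

lemma le_apply_of_mem_wClosure {S : Set E} {f : E →L[ℝ] ℝ} {c : ℝ} (hS : ∀ x ∈ S, c ≤ f x)
    {x : E} (hx : x ∈ wClosure S) : c ≤ f x := by
  obtain ⟨z, hz, rfl⟩ := hx
  have hclosed : IsClosed {z : WeakSpace ℝ E | c ≤ f ((toWeakSpace ℝ E).symm z)} :=
    isClosed_le continuous_const (WeakBilin.eval_continuous _ f)
  refine closure_minimal ?_ hclosed hz
  rintro _ ⟨y, hy, rfl⟩
  simpa using hS y hy

lemma le_apply_of_mem_normBase {K : Set E} {f : E →L[ℝ] ℝ} {α : ℝ} (hmem : (f, α) ∈ augDualCone K)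
    {x : E} (hx : x ∈ normBase K) : α ≤ f x := by
  have h := hmem.2 x hx.1
  rw [hx.2, mul_one] at h
  exact sub_nonneg.mp h

lemma mem_sharpCone_of_mem_augDualCone {K : Set E} {f : E →L[ℝ] ℝ} {α : ℝ}
    (hmem : (f, α) ∈ augDualCone K) (hα : 0 < α) : f ∈ sharpCone K := by
  intro k hk hk0
  have h := hmem.2 k hk
  have hpos : 0 < α * ‖k‖ := mul_pos hα (norm_pos_iff.mpr hk0)
  dsimp only at h
  linarith

theorem stmt7_general (K : Set E) (f : E →L[ℝ] ℝ) (α ε : ℝ)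
    (hmem : (f, α) ∈ augDualCone K) (hα : 0 < α) (hε : 0 < ε) (hεα : ε ≤ α) :
    (f, α - ε) ∈ augWSharpCone K := by
  refine ⟨sub_nonneg.mpr hεα, mem_sharpCone_of_mem_augDualCone hmem hα, fun y hy => ?_⟩
  have h := le_apply_of_mem_wClosure (fun _ => le_apply_of_mem_normBase hmem) hy
  dsimp only
  linarith

theorem stmt7 (K : Set E) (hK : IsNontrivialCone K) (f : E →L[ℝ] ℝ) (α ε : ℝ)
    (hmem : (f, α) ∈ augDualCone K) (hα : 0 < α) (hε : 0 < ε) (hεα : ε ≤ α) :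
    (f, α - ε) ∈ augWSharpCone K :=
  stmt7_general K f α ε hmem hα hε hεα
end

section
/- Let E be a real normed space and K ⊆ E a nontrivial cone with norm-base B_K. Then the following six conditions are pairwise equivalent: (1) there exists (x*, α) ∈ K^{aw#} with α > 0; (2) there exists (x*, α) ∈ K^{a#} with α > 0; (3) there exists (x*, α) ∈ K^{a+} with α > 0; (4) cor K⁺ ≠ ∅; (5) the interior of K⁺ in E* (with the dual norm topology) is nonempty; (6) 0 ∉ cl S_K, where S_K = conv(B_K) and cl denotes norm closure. -/
/-!
Everything is read off the norm-base: for a cone, `x*(y) ≥ α‖y‖` on `K` is the same as `x* ≥ α`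
on `B_K`. Separating `0` from the closed convex set `cl S_K` gives a functional bounded below by
some `α > 0` on `cl S_K`, which contains `cl_w B_K` by Mazur's theorem; conversely such a bound
on `B_K` passes to `cl S_K` and keeps `0` out of it. A functional `x* ≥ α > 0` on `B_K` has the
whole ball of radius `α` around it inside `K⁺`, and testing an interior point of `K⁺` against
norming functionals of the points of `B_K` recovers such a bound. Finally the core and the interior
of the closed set `K⁺` agree by Baire's theorem in the Banach space `E*`.
-/

open Set

variable {E : Type*} [NormedAddCommGroup E] [NormedSpace ℝ E]

theorem subset_wClosure (S : Set E) : S ⊆ wClosure S := fun x hx =>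
  ⟨toWeakSpace ℝ E x, subset_closure ⟨x, hx, rfl⟩, by simp⟩

theorem wClosure_subset_closure_convexHull (S : Set E) :
    wClosure S ⊆ closure (convexHull ℝ S) := by
  rintro _ ⟨w, hw, rfl⟩
  have hw' : w ∈ toWeakSpace ℝ E '' closure (convexHull ℝ S) := by
    rw [(convex_convexHull ℝ S).toWeakSpace_closure ℝ]
    exact closure_mono (image_mono (subset_convexHull ℝ S)) hw
  obtain ⟨y, hy, rfl⟩ := hw'
  simpa using hy

theorem le_apply_of_mem_closure_convexHull {S : Set E} {f : E →L[ℝ] ℝ} {α : ℝ}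
    (h : ∀ x ∈ S, α ≤ f x) {x : E} (hx : x ∈ closure (convexHull ℝ S)) : α ≤ f x :=
  closure_minimal (convexHull_min h (convex_halfSpace_ge f.isLinear α))
    (isClosed_le continuous_const f.continuous) hx

theorem apply_eq_norm_mul_apply_inv_norm_smul (f : E →L[ℝ] ℝ) (k : E) :
    f k = ‖k‖ * f (‖k‖⁻¹ • k) := by
  rcases eq_or_ne k 0 with rfl | hk0
  · simp
  · rw [map_smul, smul_eq_mul, mul_inv_cancel_left₀ (norm_ne_zero_iff.mpr hk0)]

theorem isClosed_dualCone (K : Set E) : IsClosed (dualCone K) := by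
  simp only [dualCone, ofPred_forall]
  exact isClosed_biInter fun k _ =>
    isClosed_le continuous_const (ContinuousLinearMap.apply ℝ ℝ k).continuous

namespace IsCone

variable {K : Set E} (hK : IsCone K) {f : E →L[ℝ] ℝ} {α : ℝ} {k : E}
include hK

theorem inv_norm_smul_mem_normBase_s8 (hk : k ∈ K) (hk0 : k ≠ 0) : ‖k‖⁻¹ • k ∈ normBase K :=
  ⟨hK.2 _ (inv_nonneg.mpr (norm_nonneg k)) k hk, norm_smul_inv_norm hk0⟩

theorem mul_norm_le_apply_s8 (h : ∀ b ∈ normBase K, α ≤ f b) (hk : k ∈ K) : α * ‖k‖ ≤ f k := by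
  rcases eq_or_ne k 0 with rfl | hk0
  · simp
  · rw [apply_eq_norm_mul_apply_inv_norm_smul f k, mul_comm]
    exact mul_le_mul_of_nonneg_left (h _ (hK.inv_norm_smul_mem_normBase_s8 hk hk0)) (norm_nonneg k)

theorem mul_norm_lt_apply (h : ∀ b ∈ normBase K, α < f b) (hk : k ∈ K) (hk0 : k ≠ 0) :
    α * ‖k‖ < f k := by
  rw [apply_eq_norm_mul_apply_inv_norm_smul f k, mul_comm]
  exact mul_lt_mul_of_pos_left (h _ (hK.inv_norm_smul_mem_normBase_s8 hk hk0))
    (norm_pos_iff.mpr hk0)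

theorem mem_augDualCone_iff {p : (E →L[ℝ] ℝ) × ℝ} :
    p ∈ augDualCone K ↔ 0 ≤ p.2 ∧ ∀ b ∈ normBase K, p.2 ≤ p.1 b := by
  refine and_congr_right fun _ => ⟨fun h b hb => ?_, fun h y hy => ?_⟩
  · simpa [hb.2] using h b hb.1
  · exact sub_nonneg.mpr (mul_comm p.2 ‖y‖ ▸ hK.mul_norm_le_apply_s8 h hy)

theorem augWSharpCone_subset_augSharpCone : augWSharpCone K ⊆ augSharpCone K := by
  rintro ⟨f, α⟩ ⟨hα, hsharp, hw⟩
  refine ⟨hα, hsharp, fun y hy hy0 => sub_pos.mpr ?_⟩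
  simpa [mul_comm] using
    hK.mul_norm_lt_apply (fun b hb => hw b (subset_wClosure _ hb)) hy hy0

theorem ball_subset_dualCone (h : ∀ b ∈ normBase K, α ≤ f b) :
    Metric.ball f α ⊆ dualCone K := by
  intro g hg k hk
  refine zero_mul ‖k‖ ▸ hK.mul_norm_le_apply_s8 (fun b hb => ?_) hk
  have hfg : |f b - g b| < α := by
    calc |f b - g b| = |(f - g) b| := rfl
      _ ≤ ‖f - g‖ * ‖b‖ := (f - g).le_opNorm b
      _ < α := by rw [hb.2, mul_one, ← dist_eq_norm, dist_comm]; exact hg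
  linarith [(abs_lt.mp hfg).2, h b hb]

theorem exists_mem_augWSharpCone_of_zero_notMem (h : (0 : E) ∉ closure (convBase K)) :
    ∃ p ∈ augWSharpCone K, 0 < p.2 := by
  obtain ⟨f, u, hu0, hu⟩ := geometric_hahn_banach_point_closed
    (convex_convexHull ℝ (normBase K)).closure isClosed_closure h
  rw [map_zero] at hu0
  have hbase : ∀ b ∈ normBase K, u < f b := fun b hb =>
    hu b (subset_closure (subset_convexHull ℝ _ hb))
  refine ⟨(f, u), ⟨hu0.le, fun k hk hk0 => ?_, fun y hy => hu y ?_⟩, hu0⟩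
  · exact (mul_pos hu0 (norm_pos_iff.mpr hk0)).trans (hK.mul_norm_lt_apply hbase hk hk0)
  · exact wClosure_subset_closure_convexHull _ hy

end IsCone

theorem augSharpCone_subset_augDualCone (K : Set E) : augSharpCone K ⊆ augDualCone K := by
  rintro ⟨f, α⟩ ⟨hα, -, hpos⟩
  refine ⟨hα, fun y hy => ?_⟩
  rcases eq_or_ne y 0 with rfl | hy0
  · simp
  · exact (hpos y hy hy0).le

theorem zero_notMem_closure_convBase {K : Set E} {f : E →L[ℝ] ℝ} {α : ℝ} (hα : 0 < α)
    (h : ∀ b ∈ normBase K, α ≤ f b) : (0 : E) ∉ closure (convBase K) := fun h0 =>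
  hα.not_ge (by simpa using le_apply_of_mem_closure_convexHull h h0)

theorem le_apply_of_closedBall_subset_dualCone {K : Set E} {f : E →L[ℝ] ℝ} {r : ℝ} (hr : 0 ≤ r)
    (h : Metric.closedBall f r ⊆ dualCone K) {b : E} (hb : b ∈ normBase K) : r ≤ f b := by
  have hb0 : ‖b‖ ≠ 0 := hb.2 ▸ one_ne_zero
  have : Nontrivial E := nontrivial_of_ne b 0 (norm_ne_zero_iff.mp hb0)
  obtain ⟨g, hg, hgb⟩ := exists_dual_vector ℝ b hb0
  have hmem : f - r • g ∈ dualCone K := h <| by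
    rw [Metric.mem_closedBall, dist_eq_norm, sub_sub_cancel_left, norm_neg, norm_smul, hg,
      mul_one, Real.norm_of_nonneg hr]
  simpa [hgb, hb.2] using hmem b hb.1

theorem IsCone.interior_dualCone_nonempty_iff {K : Set E} (hK : IsCone K) :
    (interior (dualCone K)).Nonempty ↔ ∃ p ∈ augDualCone K, 0 < p.2 := by
  constructor
  · rintro ⟨f, hf⟩
    obtain ⟨ε, hε, hball⟩ := Metric.mem_nhds_iff.mp (mem_interior_iff_mem_nhds.mp hf)
    have hsub := (Metric.closedBall_subset_ball (half_lt_self hε)).trans hball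
    exact ⟨(f, ε / 2), hK.mem_augDualCone_iff.mpr ⟨(half_pos hε).le,
      fun b hb => le_apply_of_closedBall_subset_dualCone (half_pos hε).le hsub hb⟩, half_pos hε⟩
  · rintro ⟨⟨f, α⟩, hp, hα⟩
    have hbase := (hK.mem_augDualCone_iff.mp hp).2
    exact ⟨f, mem_interior.mpr ⟨_, hK.ball_subset_dualCone hbase, Metric.isOpen_ball,
      Metric.mem_ball_self hα⟩⟩

section Core

variable {X : Type*} [TopologicalSpace X] [AddCommGroup X] [Module ℝ X]
  [ContinuousAdd X] [ContinuousSMul ℝ X]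

theorem interior_subset_core (Ω : Set X) : interior Ω ⊆ core Ω := by
  intro x hx
  refine ⟨interior_subset hx, fun v => ?_⟩
  have hcont : Continuous fun t : ℝ => x + t • v := by fun_prop
  have : (fun t : ℝ => x + t • v) ⁻¹' interior Ω ∈ nhds (0 : ℝ) :=
    hcont.continuousAt.preimage_mem_nhds (by simpa using isOpen_interior.mem_nhds hx)
  obtain ⟨ε, hε, hball⟩ := Metric.mem_nhds_iff.mp this
  refine ⟨ε / 2, half_pos hε, fun t ht => interior_subset (hball ?_)⟩
  rw [Metric.mem_ball, Real.dist_eq, sub_zero, abs_of_nonneg ht.1]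
  linarith [ht.2]

theorem IsClosed.interior_nonempty_of_core_nonempty [BaireSpace X] {C : Set X}
    (hC : IsClosed C) (h : (core C).Nonempty) : (interior C).Nonempty := by
  obtain ⟨x₀, -, hcore⟩ := h
  let φ : ℕ → X ≃ₜ X := fun n =>
    (Homeomorph.smulOfNeZero ((n + 1 : ℝ)⁻¹) (inv_ne_zero n.cast_add_one_ne_zero)).trans
      (Homeomorph.addLeft x₀)
  have hcover : ⋃ n, φ n ⁻¹' C = univ := by
    refine eq_univ_of_forall fun v => mem_iUnion.mpr ?_
    obtain ⟨ε, hε, hεv⟩ := hcore v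
    obtain ⟨n, hn⟩ := exists_nat_one_div_lt hε
    exact ⟨n, hεv (n + 1 : ℝ)⁻¹ ⟨by positivity, by simpa using hn.le⟩⟩
  obtain ⟨n, y, hy⟩ :=
    nonempty_interior_of_iUnion_of_closed (fun n => hC.preimage (φ n).continuous) hcover
  rw [← (φ n).preimage_interior] at hy
  exact ⟨φ n y, hy⟩

end Core

theorem stmt8 (K : Set E) (hK : IsNontrivialCone K) :
    List.TFAE [
      (∃ p ∈ augWSharpCone K, 0 < p.2),
      (∃ p ∈ augSharpCone K, 0 < p.2),
      (∃ p ∈ augDualCone K, 0 < p.2),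
      (core (dualCone K)).Nonempty,
      (interior (dualCone K)).Nonempty,
      (0 : E) ∉ closure (convBase K)] := by
  have hcone : IsCone K := hK.1
  tfae_have 1 → 2 := fun ⟨p, hp, hα⟩ => ⟨p, hcone.augWSharpCone_subset_augSharpCone hp, hα⟩
  tfae_have 2 → 3 := fun ⟨p, hp, hα⟩ => ⟨p, augSharpCone_subset_augDualCone K hp, hα⟩
  tfae_have 3 → 6 := fun ⟨_, hp, hα⟩ =>
    zero_notMem_closure_convBase hα (hcone.mem_augDualCone_iff.mp hp).2
  tfae_have 6 → 1 := hcone.exists_mem_augWSharpCone_of_zero_notMem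
  tfae_have 3 ↔ 5 := hcone.interior_dualCone_nonempty_iff.symm
  tfae_have 5 → 4 := fun h => h.mono (interior_subset_core _)
  tfae_have 4 → 5 := (isClosed_dualCone K).interior_nonempty_of_core_nonempty
  tfae_finish
end

section
/- Let E be a real normed space and K ⊆ E a nontrivial cone with norm-base B_K. If B_K is weakly compact, then cor K^{a+} = {(x*, α) ∈ K^{a#} | α > 0}. -/
/-!
Testing against the functional `-g` with `g y = ‖y‖` shows that a point `(f, α)` of the core
of `K^{a+}` satisfies `f y - α ‖y‖ ≥ ε ‖y‖` on `K`, and testing against `(0, -1)` gives `α > 0`.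
Conversely, by homogeneity `K^{a+}` is cut out by the inequalities `α ≤ f x` for `x ∈ B_K`.
Since `B_K` is weakly compact and functionals are weakly continuous, `f - α` has a positive
minimum on `B_K` and every `g` is bounded below there, so `(f, α) + t (g, β)` stays in
`K^{a+}` for all small `t ≥ 0`.
-/

open Set

variable {E : Type*} [NormedAddCommGroup E] [NormedSpace ℝ E]

open Filter Topology

lemma WeaklyCompact.isCompact_image {S : Set E} (hS : WeaklyCompact S) (f : E →L[ℝ] ℝ) :
    IsCompact (f '' S) := by
  convert hS.image (WeakBilin.eval_continuous _ f) using 1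
  exact (image_image _ _ _).symm

lemma mem_core_of_forall_eventually {X : Type*} [AddCommGroup X] [Module ℝ X] {Ω : Set X}
    {x : X} (h : ∀ v : X, ∀ᶠ t in 𝓝[≥] (0 : ℝ), x + t • v ∈ Ω) : x ∈ core Ω := by
  have hIcc : ∀ v : X, ∃ ε > 0, ∀ t ∈ Icc (0 : ℝ) ε, x + t • v ∈ Ω := fun v => by
    obtain ⟨ε, hε, hsub⟩ := mem_nhdsGE_iff_exists_Icc_subset.1 (h v)
    exact ⟨ε, hε, hsub⟩
  obtain ⟨ε, hε, h₀⟩ := hIcc 0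
  exact ⟨by simpa using h₀ 0 ⟨le_rfl, hε.le⟩, hIcc⟩

lemma eventually_nhdsGE_forall_nonneg_add_mul {ι : Type*} {S : Set ι} {a b : ι → ℝ} {m C : ℝ}
    (hm : 0 < m) (ha : ∀ i ∈ S, m ≤ a i) (hb : ∀ i ∈ S, C ≤ b i) :
    ∀ᶠ t in 𝓝[≥] (0 : ℝ), ∀ i ∈ S, 0 ≤ a i + t * b i := by
  have hsmall : ∀ᶠ t in 𝓝 (0 : ℝ), -m < t * C :=
    ((continuous_mul_const C).tendsto' 0 0 (zero_mul C)).eventually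
      (eventually_gt_nhds (neg_neg_of_pos hm))
  filter_upwards [self_mem_nhdsWithin, nhdsWithin_le_nhds hsmall] with t (ht : 0 ≤ t) htC i hi
  nlinarith [mul_le_mul_of_nonneg_left (hb i hi) ht, ha i hi]

lemma mem_normBase_inv_norm_smul {K : Set E} (hK : IsCone K) {y : E} (hy : y ∈ K)
    (hy0 : y ≠ 0) : ‖y‖⁻¹ • y ∈ normBase K := by
  refine ⟨hK.2 _ (by positivity) y hy, ?_⟩
  rw [norm_smul, norm_inv, norm_norm, inv_mul_cancel₀ (norm_ne_zero_iff.2 hy0)]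

lemma mem_augDualCone_iff {K : Set E} (hK : IsCone K) {p : (E →L[ℝ] ℝ) × ℝ} :
    p ∈ augDualCone K ↔ 0 ≤ p.2 ∧ ∀ x ∈ normBase K, p.2 ≤ p.1 x := by
  refine and_congr_right fun _ => ⟨fun h x hx => ?_, fun h y hy => ?_⟩
  · simpa [hx.2] using h x hx.1
  · rcases eq_or_ne y 0 with rfl | hy0
    · simp
    have := h _ (mem_normBase_inv_norm_smul hK hy hy0)
    rw [map_smul, smul_eq_mul, le_inv_mul_iff₀ (norm_pos_iff.2 hy0)] at this
    linarith

lemma core_augDualCone_subset (K : Set E) :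
    core (augDualCone K) ⊆ {p ∈ augSharpCone K | 0 < p.2} := by
  rintro ⟨f, α⟩ ⟨⟨hα, -⟩, hcore⟩
  have hαpos : 0 < α := by
    obtain ⟨ε, hε, hmem⟩ := hcore (0, -1)
    have := (hmem ε ⟨hε.le, le_rfl⟩).1
    simp only [Prod.snd_add, Prod.smul_snd, smul_eq_mul] at this
    linarith
  have hstrict : ∀ y ∈ K, y ≠ 0 → 0 < f y - α * ‖y‖ := by
    intro y hy hy0
    obtain ⟨g, -, hgy⟩ := exists_dual_vector'' ℝ y
    obtain ⟨ε, hε, hmem⟩ := hcore (-g, 0)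
    have hgap : α * ‖y‖ + ε * ‖y‖ ≤ f y := by
      simpa [hgy, mul_comm] using (hmem ε ⟨hε.le, le_rfl⟩).2 y hy
    linarith [mul_pos hε (norm_pos_iff.2 hy0)]
  refine ⟨⟨hα, fun y hy hy0 => ?_, hstrict⟩, hαpos⟩
  linarith [hstrict y hy hy0, mul_nonneg hα (norm_nonneg y)]

lemma subset_core_augDualCone {K : Set E} (hK : IsCone K) (hcomp : WeaklyCompact (normBase K)) :
    {p ∈ augSharpCone K | 0 < p.2} ⊆ core (augDualCone K) := by
  rintro ⟨f, α⟩ ⟨⟨-, -, hstrict⟩, hα⟩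
  have hbase : ∀ x ∈ normBase K, α < f x := fun x hx => by
    simpa [hx.2] using hstrict x hx.1 (norm_ne_zero_iff.1 (by simp [hx.2]))
  obtain ⟨m, hαm, hm⟩ :=
    (hcomp.isCompact_image f).exists_forall_le' continuousOn_id (forall_mem_image.2 hbase)
  refine mem_core_of_forall_eventually fun ⟨g, β⟩ => ?_
  obtain ⟨C, hC⟩ := (hcomp.isCompact_image g).bddBelow
  have hshift : ∀ᶠ t in 𝓝[≥] (0 : ℝ), 0 ≤ α + t * β :=
    nhdsWithin_le_nhds <| ((continuous_const.add (continuous_id.mul continuous_const)).tendsto' 0 α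
      (by simp)).eventually (eventually_ge_nhds hα)
  have hperturb := eventually_nhdsGE_forall_nonneg_add_mul (a := fun x => f x - α)
    (b := fun x => g x - β) (sub_pos.2 hαm)
    (fun x hx => sub_le_sub_right (hm _ (mem_image_of_mem f hx)) α)
    (fun x hx => sub_le_sub_right (hC (mem_image_of_mem g hx)) β)
  filter_upwards [hshift, hperturb] with t ht₁ ht₂
  refine (mem_augDualCone_iff hK).2 ⟨by simpa using ht₁, fun x hx => ?_⟩
  simp only [Prod.fst_add, Prod.snd_add, Prod.smul_fst, Prod.smul_snd, smul_eq_mul,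
    add_apply, smul_apply]
  linarith [ht₂ x hx]

theorem stmt12 (K : Set E) (hK : IsNontrivialCone K)
    (hcomp : WeaklyCompact (normBase K)) :
    core (augDualCone K) = {p ∈ augSharpCone K | 0 < p.2} :=
  (core_augDualCone_subset K).antisymm (subset_core_augDualCone hK.1 hcomp)
end
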